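/- Let k ≥ 1 and d ≥ 0 be integers. The map ψ sends every hit homogeneous polynomial of degree 2d+k in P_k to a hit homogeneous polynomial of degree d, and hence induces an 𝔽₂-linear map (S̃q⁰_*)_{(k,d)} : (QP_k)_{2d+k} → (QP_k)_d. Moreover, if μ(2d+k) = k, then this induced map is an isomorphism of 𝔽₂-vector spaces. -/

import Mathlib

open MvPolynomial

/-- `P k` is the polynomial algebra `𝔽₂[x_1, …, x_k]`, graded by total degree. -/
abbrev P (k : ℕ) := MvPolynomial (Fin k) (ZMod 2)

/-- The total Steenrod square: the `𝔽₂`-algebra endomorphism of `P k` determined by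
`Sq (x_j) = x_j + x_j ^ 2`. -/
noncomputable def SqTotal (k : ℕ) : P k →ₐ[ZMod 2] P k :=
  aeval fun j => X j + X j ^ 2

/-- The space of hit polynomials of degree `n` in `P k`: the `𝔽₂`-linear span of the
degree-`n` homogeneous components of the polynomials `Sq g`, where `g` ranges over the
homogeneous polynomials of degree `< n`. -/
noncomputable def hitSubmodule (k n : ℕ) : Submodule (ZMod 2) (P k) :=
  Submodule.span (ZMod 2)
    {f | ∃ m, m < n ∧ ∃ g ∈ homogeneousSubmodule (Fin k) (ZMod 2) m,
      f = homogeneousComponent n (SqTotal k g)}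

/-- The span of homogeneous components of all degrees different from `n`. -/
noncomputable def offDegree (k n : ℕ) : Submodule (ZMod 2) (P k) :=
  ⨆ (m : ℕ) (_ : m ≠ n), homogeneousSubmodule (Fin k) (ZMod 2) m

/-- The submodule of `P k` by which one quotients to get the cohit space in degree `n`.
Since `P k` is the direct sum of its homogeneous components, the quotient
`P k ⧸ hitTotal k n` is canonically identified with the quotient of the space of
homogeneous polynomials of degree `n` by its subspace of hit polynomials. -/
noncomputable def hitTotal (k n : ℕ) : Submodule (ZMod 2) (P k) :=
  hitSubmodule k n ⊔ offDegree k n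

/-- The cohit space `(QP_k)_n = (𝔽₂ ⊗_𝒜 P_k)_n`. -/
abbrev QP (k n : ℕ) := P k ⧸ hitTotal k n

/-- `μ n`: the smallest `r` such that `n` can be written as a sum
`(2^{u_1} - 1) + ⋯ + (2^{u_r} - 1)` with all `u_i > 0`. -/
noncomputable def mu (n : ℕ) : ℕ :=
  sInf {r : ℕ | ∃ u : Fin r → ℕ, (∀ i, 0 < u i) ∧ n = ∑ i, (2 ^ u i - 1)}

/-- Kameko's map `ψ : P k → P k`, the `𝔽₂`-linear map sending a monomial with all
exponents odd, `x_1^{a_1} ⋯ x_k^{a_k}`, to `x_1^{(a_1-1)/2} ⋯ x_k^{(a_k-1)/2}`, and all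
other monomials to `0`. -/
noncomputable def psi (k : ℕ) : P k →ₗ[ZMod 2] P k :=
  (Finsupp.lsum (ZMod 2) fun a : Fin k →₀ ℕ =>
    if ∀ j, Odd (a j) then monomial (a.mapRange (· / 2) (Nat.zero_div 2)) else 0) ∘ₗ
    (AddMonoidAlgebra.coeffLinearEquiv (ZMod 2)).toLinearMap

/-- `κ : (QP_k)_a → (QP_k)_b` is (induced by) Kameko's squaring operation if it commutes
with `ψ` on classes of homogeneous polynomials of degree `a`. -/
def IsKameko (k a b : ℕ) (κ : QP k a →ₗ[ZMod 2] QP k b) : Prop :=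
  ∀ f ∈ homogeneousSubmodule (Fin k) (ZMod 2) a,
    κ ((hitTotal k a).mkQ f) = (hitTotal k b).mkQ (psi k f)

/-- `P_k^0`: the span of the monomials having at least one exponent equal to zero. -/
noncomputable def P0 (k : ℕ) : Submodule (ZMod 2) (P k) :=
  Submodule.span (ZMod 2)
    {f | ∃ a : Fin k →₀ ℕ, (∃ j, a j = 0) ∧ f = monomial a 1}

/-- `P_k^+`: the span of the monomials with all exponents positive. -/
noncomputable def Pplus (k : ℕ) : Submodule (ZMod 2) (P k) :=
  Submodule.span (ZMod 2)
    {f | ∃ a : Fin k →₀ ℕ, (∀ j, a j ≠ 0) ∧ f = monomial a 1}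

/-- `(QP_k^0)_n`: the image in `(QP_k)_n` of the degree-`n` homogeneous part of `P_k^0`. -/
noncomputable def Q0 (k n : ℕ) : Submodule (ZMod 2) (QP k n) :=
  (P0 k ⊓ homogeneousSubmodule (Fin k) (ZMod 2) n).map (hitTotal k n).mkQ

/-- `(QP_k^+)_n`: the image in `(QP_k)_n` of the degree-`n` homogeneous part of `P_k^+`. -/
noncomputable def Qplus (k n : ℕ) : Submodule (ZMod 2) (QP k n) :=
  (Pplus k ⊓ homogeneousSubmodule (Fin k) (ZMod 2) n).map (hitTotal k n).mkQ

/-- The weight vector of a monomial with exponents `a`: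
`wtVec k a i` is the number of variables `x_j` such that the `i`-th binary digit of the
exponent `a j` equals `1` (this is `ω_{i+1}` in the 1-indexed notation of the paper). -/
def wtVec (k : ℕ) (a : Fin k →₀ ℕ) (i : ℕ) : ℕ :=
  (Finset.univ.filter fun j : Fin k => (a j).testBit i).card

/-- Strict left lexicographic order on weight vectors (as functions `ℕ → ℕ`). -/
def lexLt (u v : ℕ → ℕ) : Prop :=
  ∃ i, (∀ j, j < i → u j = v j) ∧ u i < v i

/-- Left lexicographic order on weight vectors. -/
def lexLe (u v : ℕ → ℕ) : Prop :=
  u = v ∨ lexLt u v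

/-- A weight vector `(ω_1, ω_2, …)` given as a list, as a function `ℕ → ℕ`
(0-indexed: the value at `i` is `ω_{i+1}`). -/
def listToFun (L : List ℕ) : ℕ → ℕ := fun i => L.getD i 0

/-- The degree of a weight vector: `deg ω = ∑_{i ≥ 1} 2^{i-1} ω_i`. -/
def degWeight (L : List ℕ) : ℕ :=
  ∑ i ∈ Finset.range L.length, 2 ^ i * L.getD i 0

/-- `P_k(ω)`: the span of the monomials of degree `deg ω` whose weight vector is `≤ ω`. -/
noncomputable def POmega (k : ℕ) (L : List ℕ) : Submodule (ZMod 2) (P k) :=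
  Submodule.span (ZMod 2)
    {f | ∃ a : Fin k →₀ ℕ, (a.sum fun _ e => e) = degWeight L ∧
      lexLe (wtVec k a) (listToFun L) ∧ f = monomial a 1}

/-- `P_k^-(ω)`: the span of the monomials of degree `deg ω` whose weight vector is `< ω`. -/
noncomputable def POmegaLt (k : ℕ) (L : List ℕ) : Submodule (ZMod 2) (P k) :=
  Submodule.span (ZMod 2)
    {f | ∃ a : Fin k →₀ ℕ, (a.sum fun _ e => e) = degWeight L ∧
      lexLt (wtVec k a) (listToFun L) ∧ f = monomial a 1}

/-- The subspace `(H ∩ P_k(ω)) + P_k^-(ω)` of `P_k(ω)`, where `H` is the space of hit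
polynomials of degree `deg ω`. -/
noncomputable def NOmega (k : ℕ) (L : List ℕ) : Submodule (ZMod 2) ↥(POmega k L) :=
  ((hitSubmodule k (degWeight L) ⊓ POmega k L) ⊔ POmegaLt k L).comap (POmega k L).subtype

/-- `QP_k(ω) = P_k(ω) / ((H ∩ P_k(ω)) + P_k^-(ω))`. -/
abbrev QPOmega (k : ℕ) (L : List ℕ) := ↥(POmega k L) ⧸ NOmega k L

/-- The span of the monomials in `P_k(ω)` all of whose exponents are positive. -/
noncomputable def PplusOmega (k : ℕ) (L : List ℕ) : Submodule (ZMod 2) (P k) :=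
  Submodule.span (ZMod 2)
    {f | ∃ a : Fin k →₀ ℕ, (a.sum fun _ e => e) = degWeight L ∧
      lexLe (wtVec k a) (listToFun L) ∧ (∀ j, a j ≠ 0) ∧ f = monomial a 1}

/-- `QP_k^+(ω)`: the image in `QP_k(ω)` of the span of the monomials in `P_k(ω)` all of
whose exponents are positive. -/
noncomputable def QPplusOmega (k : ℕ) (L : List ℕ) : Submodule (ZMod 2) (QPOmega k L) :=
  (((PplusOmega k L).comap (POmega k L).subtype)).map (NOmega k L).mkQ

/-- The generic degree `k(2^s - 1) + 2^s d`. -/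
def degseq (k d s : ℕ) : ℕ := k * (2 ^ s - 1) + 2 ^ s * d

/-- `t(k,d) = max {0, k - α(d+k) - ζ(d+k)}`, where `α` is the number of ones in the
binary expansion and `ζ` is the 2-adic valuation. -/
def tkd (k d : ℕ) : ℕ :=
  k - ((Nat.digits 2 (d + k)).sum + (d + k).factorization 2)

/-- The `j`-fold composite of a family of maps
`κ s : (QP_k)_{n (s+1)} → (QP_k)_{n s}`, going from `(QP_k)_{n (t+j)}` down to
`(QP_k)_{n t}`. -/
noncomputable def iterComp (k : ℕ) (n : ℕ → ℕ)
    (κ : ∀ s, QP k (n (s + 1)) →ₗ[ZMod 2] QP k (n s)) :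
    ∀ t j : ℕ, QP k (n (t + j)) →ₗ[ZMod 2] QP k (n t)
  | _, 0 => LinearMap.id
  | t, j + 1 => (iterComp k n κ t j).comp (κ (t + j))


/-!
Write `c = x₁ ⋯ x_k` and `x_T = ∏_{j ∈ T} x_j`. Every monomial factors as `x_T w²`, `T` being the
set of its odd exponents, and `ψ (x_T w²)` is `w` if `T` is everything and `0` otherwise. Since
`Sq (x_T) = ∑_{U ⊆ T} x_U x_{T∖U}²`, this gives `ψ ∘ Sq = Sq ∘ ψ`; as `ψ` also moves the degree
`2d + k` component to the degree `d` component, it maps hit polynomials to hit polynomials. All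
hit polynomials needed arise in one way: the degree `n` part of `Sq q` is hit as soon as `q` has
no degree `n` part.

The map `g ↦ c g²` is a section of `ψ`, which gives surjectivity. For injectivity, a monomial `x_S z²` of degree `n` with
`|S| < μ(n)` is hit (Peterson–Wood): with `V = ∏_{j ∈ S} ∑_i x_j^{2^i}`, the degree `n` part of
`Sq (V z) ≡ x_S Sq z` (modulo high powers `x_j^{2^i}`) is `x_S z²`, while `V z` has no degree `n`
part, since a monomial of `V` of degree `|S| + deg z` would exhibit `n` as a sum of `|S|` numbers
`2^u - 1`. So when `μ(2d + k) = k`, every homogeneous `f` with `ψ f = 0` is hit (each of its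
monomials has an even exponent, hence fewer than `k` odd ones), in particular
`f + c ψ(f)²`; and `c g²` is hit for a hit generator `g = (Sq h)_d`, because
`g = ψ (Sq (c h²))_{2d+k}`.
-/

section HomogeneousComponent

variable {σ R : Type*} [CommSemiring R]

attribute [local instance] MvPolynomial.gradedAlgebra

lemma homogeneousComponent_mul_of_le {z : MvPolynomial σ R} {m n : ℕ} (hz : z.IsHomogeneous m)
    (h : m ≤ n) (p : MvPolynomial σ R) :
    homogeneousComponent n (z * p) = z * homogeneousComponent (n - m) p := by
  simp only [← decomposition.decompose'_apply]
  exact DirectSum.coe_decompose_mul_of_left_mem_of_le (homogeneousSubmodule σ R) hz h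

lemma homogeneousComponent_mul_of_lt {z : MvPolynomial σ R} {m n : ℕ} (hz : z.IsHomogeneous m)
    (h : n < m) (p : MvPolynomial σ R) : homogeneousComponent n (z * p) = 0 := by
  simp only [← decomposition.decompose'_apply]
  exact DirectSum.coe_decompose_mul_of_left_mem_of_not_le (homogeneousSubmodule σ R) hz h.not_ge

lemma homogeneousComponent_add_mul_of_totalDegree_le {p q : MvPolynomial σ R} {c d : ℕ}
    (hp : p.totalDegree ≤ c) (hq : q.totalDegree ≤ d) :
    homogeneousComponent (c + d) (p * q) = homogeneousComponent c p * homogeneousComponent d q := by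
  conv_lhs => rw [← sum_homogeneousComponent p, Finset.sum_mul, map_sum]
  rw [Finset.sum_eq_single c]
  · rw [homogeneousComponent_mul_of_le (homogeneousComponent_isHomogeneous c p) (by omega),
      Nat.add_sub_cancel_left]
  · intro i hi hic
    rw [Finset.mem_range] at hi
    rw [homogeneousComponent_mul_of_le (homogeneousComponent_isHomogeneous i p) (by omega),
      homogeneousComponent_eq_zero (c + d - i) q (by omega), mul_zero]
  · intro hc
    rw [Finset.mem_range] at hc
    rw [homogeneousComponent_eq_zero c p (by omega), zero_mul, map_zero]

lemma homogeneousComponent_pow_of_totalDegree_le {p : MvPolynomial σ R} {c : ℕ}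
    (hp : p.totalDegree ≤ c) (e : ℕ) :
    homogeneousComponent (e * c) (p ^ e) = homogeneousComponent c p ^ e := by
  induction e with
  | zero => simp [homogeneousComponent_zero]
  | succ e ih =>
    have hpe : (p ^ e).totalDegree ≤ e * c :=
      (totalDegree_pow p e).trans (Nat.mul_le_mul_left e hp)
    rw [pow_succ, pow_succ, add_mul, one_mul,
      homogeneousComponent_add_mul_of_totalDegree_le hpe hp, ih]

lemma homogeneousComponent_prod_of_totalDegree_le {ι : Type*} (s : Finset ι)
    (f : ι → MvPolynomial σ R) (c : ι → ℕ) (h : ∀ i ∈ s, (f i).totalDegree ≤ c i) :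
    homogeneousComponent (∑ i ∈ s, c i) (∏ i ∈ s, f i) =
      ∏ i ∈ s, homogeneousComponent (c i) (f i) := by
  classical
  induction s using Finset.induction_on with
  | empty => simp [homogeneousComponent_zero]
  | insert i s hi ih =>
    have hs : (∏ j ∈ s, f j).totalDegree ≤ ∑ j ∈ s, c j :=
      (totalDegree_finsetProd s f).trans
        (Finset.sum_le_sum fun j hj => h j (Finset.mem_insert_of_mem hj))
    rw [Finset.sum_insert hi, Finset.prod_insert hi, Finset.prod_insert hi,
      homogeneousComponent_add_mul_of_totalDegree_le (h i (Finset.mem_insert_self i s)) hs,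
      ih fun j hj => h j (Finset.mem_insert_of_mem hj)]

end HomogeneousComponent

section Psi

variable {k : ℕ}

noncomputable def halve (a : Fin k →₀ ℕ) : Fin k →₀ ℕ := a.mapRange (· / 2) (Nat.zero_div 2)

noncomputable def twiceAddOne (b : Fin k →₀ ℕ) : Fin k →₀ ℕ :=
  Finsupp.equivFunOnFinite.symm fun j => 2 * b j + 1

@[simp] lemma halve_apply (a : Fin k →₀ ℕ) (j : Fin k) : halve a j = a j / 2 := rfl

@[simp] lemma twiceAddOne_apply (b : Fin k →₀ ℕ) (j : Fin k) : twiceAddOne b j = 2 * b j + 1 :=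
  rfl

lemma halve_twiceAddOne (b : Fin k →₀ ℕ) : halve (twiceAddOne b) = b := by
  ext j
  simp only [halve_apply, twiceAddOne_apply]
  omega

lemma twiceAddOne_halve {a : Fin k →₀ ℕ} (ha : ∀ j, Odd (a j)) : twiceAddOne (halve a) = a := by
  ext j
  have := Nat.odd_iff.mp (ha j)
  simp only [twiceAddOne_apply, halve_apply]
  omega

lemma degree_twiceAddOne (b : Fin k →₀ ℕ) : (twiceAddOne b).degree = 2 * b.degree + k := by
  simp [Finsupp.degree_eq_sum, Finset.sum_add_distrib, Finset.mul_sum]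

lemma psi_monomial (a : Fin k →₀ ℕ) (r : ZMod 2) :
    psi k (monomial a r) = if ∀ j, Odd (a j) then monomial (halve a) r else 0 := by
  have hcoeff : AddMonoidAlgebra.coeffLinearEquiv (ZMod 2) (monomial a r : P k) =
      Finsupp.single a r := rfl
  simp only [psi, LinearMap.comp_apply, LinearEquiv.coe_coe, hcoeff, Finsupp.lsum_single]
  split_ifs <;> rfl

lemma coeff_psi (p : P k) (b : Fin k →₀ ℕ) : coeff b (psi k p) = coeff (twiceAddOne b) p := by
  induction p using MvPolynomial.induction_on' with
  | monomial a r =>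
    rw [psi_monomial, coeff_monomial]
    by_cases ha : a = twiceAddOne b
    · subst ha
      simp [halve_twiceAddOne]
    · split_ifs with hodd
      · rw [coeff_monomial, if_neg]
        rintro rfl
        exact ha (twiceAddOne_halve hodd).symm
      · rfl
  | add p q hp hq => simp [hp, hq]

lemma psi_homogeneousComponent (d : ℕ) (p : P k) :
    psi k (homogeneousComponent (2 * d + k) p) = homogeneousComponent d (psi k p) := by
  ext b
  simp only [coeff_psi, coeff_homogeneousComponent, degree_twiceAddOne]
  congr 1
  simp

lemma psi_mul_sq (p w : P k) : psi k (p * w ^ 2) = psi k p * w := by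
  induction w using MvPolynomial.induction_on' with
  | monomial v s =>
    induction p using MvPolynomial.induction_on' with
    | monomial u r =>
      have hodd : (∀ j, Odd ((u + (v + v)) j)) ↔ ∀ j, Odd (u j) :=
        forall_congr' fun j => by simp [Nat.odd_add]
      have hhalve : halve (u + (v + v)) = halve u + v := by
        ext j
        simp only [halve_apply, Finsupp.coe_add, Pi.add_apply]
        omega
      rw [pow_two, monomial_mul, monomial_mul, psi_monomial, psi_monomial]
      by_cases hu : ∀ j, Odd (u j)
      · rw [if_pos (hodd.mpr hu), if_pos hu, hhalve, monomial_mul, ← pow_two s, ZMod.pow_card]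
      · rw [if_neg (mt hodd.mp hu), if_neg hu, zero_mul]
    | add p q hp hq => rw [add_mul, map_add, hp, hq, map_add, add_mul]
  | add w₁ w₂ h₁ h₂ => rw [add_pow_char, mul_add, map_add, h₁, h₂, mul_add]

end Psi

section SqTotal

variable {k : ℕ}

lemma SqTotal_X (j : Fin k) : SqTotal k (X j) = X j + X j ^ 2 := aeval_X _ _

lemma SqTotal_monomial (a : Fin k →₀ ℕ) (r : ZMod 2) :
    SqTotal k (monomial a r) = monomial a r * ∏ j, (1 + X j) ^ a j := by
  have hX : ∀ j, (X j + X j ^ 2 : P k) ^ a j = X j ^ a j * (1 + X j) ^ a j := fun j => by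
    rw [← mul_pow]; ring
  rw [SqTotal, aeval_monomial, Finsupp.prod_fintype _ _ fun _ => pow_zero _,
    Finset.prod_congr rfl fun j _ => hX j, Finset.prod_mul_distrib, monomial_eq,
    Finsupp.prod_fintype _ _ fun _ => pow_zero _, algebraMap_eq, mul_assoc]

lemma homogeneousComponent_SqTotal_of_lt {p : P k} {m n : ℕ} (hp : p.IsHomogeneous m)
    (hn : n < m) : homogeneousComponent n (SqTotal k p) = 0 := by
  rw [p.as_sum, map_sum, map_sum]
  refine Finset.sum_eq_zero fun a ha => ?_
  rw [SqTotal_monomial]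
  exact homogeneousComponent_mul_of_lt
    (isHomogeneous_monomial _ (hp.degree_eq_sum_deg_support ha).symm) hn _

lemma homogeneousComponent_two_mul_SqTotal_monomial (b : Fin k →₀ ℕ) :
    homogeneousComponent (2 * b.degree) (SqTotal k (monomial b 1)) = monomial b 1 ^ 2 := by
  have hdeg : ∀ j, (X j + X j ^ 2 : P k).totalDegree ≤ 2 := fun j =>
    (totalDegree_add _ _).trans (max_le ((totalDegree_X j).trans_le one_le_two)
      (totalDegree_X_pow j 2).le)
  have htop : ∀ j, homogeneousComponent 2 (X j + X j ^ 2 : P k) = X j ^ 2 := fun j => by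
    rw [map_add, homogeneousComponent_of_mem (isHomogeneous_X (ZMod 2) j),
      homogeneousComponent_eq_self (isHomogeneous_X_pow j 2)]
    simp
  rw [SqTotal, aeval_monomial, map_one, one_mul, Finsupp.prod_fintype _ _ fun _ => pow_zero _,
    Finsupp.degree_eq_sum, Finset.mul_sum]
  simp_rw [mul_comm 2 (b _)]
  rw [homogeneousComponent_prod_of_totalDegree_le _ _ _ fun j _ =>
    (totalDegree_pow _ _).trans (Nat.mul_le_mul_left _ (hdeg j))]
  rw [Finset.prod_congr rfl fun j _ => by
      rw [homogeneousComponent_pow_of_totalDegree_le (hdeg j), htop, ← pow_mul, mul_comm, pow_mul],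
    Finset.prod_pow, monomial_eq, map_one, one_mul, Finsupp.prod_fintype _ _ fun _ => pow_zero _]

lemma SqTotal_prod_X (T : Finset (Fin k)) :
    SqTotal k (∏ j ∈ T, X j) = ∑ U ∈ T.powerset, (∏ j ∈ U, X j) * (∏ j ∈ T \ U, X j) ^ 2 := by
  simp_rw [map_prod, SqTotal_X, Finset.prod_add, Finset.prod_pow]

end SqTotal

section PsiSqTotal

variable {k : ℕ}

lemma prod_X_eq_monomial_indicator (T : Finset (Fin k)) :
    (∏ j ∈ T, X j : P k) = monomial (Finsupp.indicator T fun _ _ => 1) 1 := by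
  simpa using prod_X_pow (R := ZMod 2) (fun _ => 1) T

lemma psi_prod_X (T : Finset (Fin k)) :
    psi k (∏ j ∈ T, X j) = if T = Finset.univ then 1 else 0 := by
  have hodd : (∀ j, Odd (Finsupp.indicator T (fun _ _ => 1) j)) ↔ T = Finset.univ := by
    simp only [Finsupp.indicator_apply, Finset.eq_univ_iff_forall, dite_eq_ite]
    exact forall_congr' fun j => by split_ifs with hj <;> simp [hj]
  rw [prod_X_eq_monomial_indicator, psi_monomial]
  by_cases hTu : T = Finset.univ
  · have h0 : halve (Finsupp.indicator T fun _ _ => 1) = 0 := by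
      ext j; simp only [halve_apply, Finsupp.indicator_apply]; split_ifs <;> rfl
    rw [if_pos (hodd.mpr hTu), if_pos hTu, h0, monomial_zero', C_1]
  · rw [if_neg (mt hodd.mp hTu), if_neg hTu]

lemma psi_SqTotal_prod_X (T : Finset (Fin k)) :
    psi k (SqTotal k (∏ j ∈ T, X j)) = SqTotal k (psi k (∏ j ∈ T, X j)) := by
  simp_rw [SqTotal_prod_X, map_sum, psi_mul_sq, psi_prod_X, ite_mul, one_mul, zero_mul,
    Finset.sum_ite_eq', Finset.mem_powerset, Finset.univ_subset_iff]
  split_ifs with hT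
  · simp [hT]
  · rw [map_zero]

lemma monomial_one_eq_prod_X_mul_sq (a : Fin k →₀ ℕ) :
    monomial a (1 : ZMod 2) = (∏ j with Odd (a j), X j) * monomial (halve a) 1 ^ 2 := by
  have ha : (Finsupp.indicator {j | Odd (a j)} fun _ _ => 1) + (halve a + halve a) = a := by
    ext j
    simp only [Finsupp.add_apply, Finsupp.indicator_apply, halve_apply, Finset.mem_filter_univ,
      dite_eq_ite]
    split_ifs with hj
    · have := Nat.odd_iff.mp hj; omega
    · have := Nat.not_odd_iff.mp hj; omega
  rw [prod_X_eq_monomial_indicator, pow_two, monomial_mul, monomial_mul, mul_one, mul_one, ha]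

lemma psi_SqTotal (p : P k) : psi k (SqTotal k p) = SqTotal k (psi k p) := by
  induction p using MvPolynomial.induction_on' with
  | monomial a r =>
    rw [← mul_one r, ← smul_eq_mul, ← smul_monomial]
    simp only [map_smul]
    rw [monomial_one_eq_prod_X_mul_sq, map_mul, map_pow, psi_mul_sq, psi_mul_sq,
      psi_SqTotal_prod_X, map_mul]
  | add p q hp hq => simp only [map_add, hp, hq]

end PsiSqTotal

section Hit

variable {k : ℕ}

theorem homogeneousComponent_SqTotal_mem_hitSubmodule {q : P k} {n : ℕ}
    (hq : homogeneousComponent n q = 0) :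
    homogeneousComponent n (SqTotal k q) ∈ hitSubmodule k n := by
  rw [← sum_homogeneousComponent q, map_sum, map_sum]
  refine Submodule.sum_mem _ fun c _ => ?_
  rcases lt_trichotomy c n with hc | rfl | hc
  · exact Submodule.subset_span ⟨c, hc, _, homogeneousComponent_mem c q, rfl⟩
  · simp [hq]
  · rw [homogeneousComponent_SqTotal_of_lt (homogeneousComponent_isHomogeneous c q) hc]
    exact Submodule.zero_mem _

theorem hitSubmodule_le_comap_psi (d : ℕ) :
    hitSubmodule k (2 * d + k) ≤ (hitSubmodule k d).comap (psi k) := by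
  refine Submodule.span_le.mpr ?_
  rintro _ ⟨m, hm, g, hg, rfl⟩
  rw [SetLike.mem_coe, Submodule.mem_comap, psi_homogeneousComponent, psi_SqTotal]
  apply homogeneousComponent_SqTotal_mem_hitSubmodule
  rw [← psi_homogeneousComponent, homogeneousComponent_of_mem hg, if_neg hm.ne', map_zero]

lemma hitSubmodule_le_homogeneousSubmodule (n : ℕ) :
    hitSubmodule k n ≤ homogeneousSubmodule (Fin k) (ZMod 2) n :=
  Submodule.span_le.mpr fun _ ⟨_, _, _, _, hf⟩ => hf ▸ homogeneousComponent_mem _ _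

lemma homogeneousComponent_eq_zero_of_mem_offDegree {q : P k} {n : ℕ} (hq : q ∈ offDegree k n) :
    homogeneousComponent n q = 0 := by
  refine (iSup₂_le fun m hm p hp => ?_ : offDegree k n ≤ LinearMap.ker _) hq
  rw [LinearMap.mem_ker, homogeneousComponent_of_mem hp, if_neg hm.symm]

lemma mem_offDegree_of_homogeneousComponent_eq_zero {q : P k} {n : ℕ}
    (hq : homogeneousComponent n q = 0) : q ∈ offDegree k n := by
  rw [← sum_homogeneousComponent q]
  refine Submodule.sum_mem _ fun c _ => ?_
  by_cases hc : c = n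
  · rw [hc, hq]
    exact Submodule.zero_mem _
  · exact le_iSup₂ (f := fun m (_ : m ≠ n) => homogeneousSubmodule (Fin k) (ZMod 2) m) c hc
      (homogeneousComponent_mem c q)

theorem mem_hitTotal_iff {p : P k} {n : ℕ} :
    p ∈ hitTotal k n ↔ homogeneousComponent n p ∈ hitSubmodule k n := by
  constructor
  · intro hp
    obtain ⟨y, hy, z, hz, rfl⟩ := Submodule.mem_sup.mp hp
    rwa [map_add, homogeneousComponent_eq_self (hitSubmodule_le_homogeneousSubmodule n hy),
      homogeneousComponent_eq_zero_of_mem_offDegree hz, add_zero]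
  · intro hp
    rw [← add_sub_cancel (homogeneousComponent n p) p]
    refine Submodule.add_mem_sup hp (mem_offDegree_of_homogeneousComponent_eq_zero ?_)
    rw [map_sub, homogeneousComponent_eq_self (homogeneousComponent_isHomogeneous n p), sub_self]

lemma hitTotal_le_comap_psi (d : ℕ) :
    hitTotal k (2 * d + k) ≤ (hitTotal k d).comap (psi k) := fun p hp => by
  rw [Submodule.mem_comap, mem_hitTotal_iff, ← psi_homogeneousComponent]
  exact hitSubmodule_le_comap_psi d (mem_hitTotal_iff.mp hp)

end Hit

noncomputable def kameko (k d : ℕ) : QP k (2 * d + k) →ₗ[ZMod 2] QP k d :=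
  (hitTotal k (2 * d + k)).mapQ (hitTotal k d) (psi k) (hitTotal_le_comap_psi d)

section PetersonWood

open Finset

variable {k : ℕ}

lemma mu_le_of_add_eq {n s : ℕ} (i : Fin s → ℕ) (h : n + s = 2 * ∑ t, 2 ^ i t) : mu n ≤ s := by
  refine Nat.sInf_le ⟨fun t => i t + 1, fun _ => Nat.succ_pos _, ?_⟩
  have hsum : ∑ t, (2 ^ (i t + 1) - 1) + ∑ _t : Fin s, 1 = 2 * ∑ t, 2 ^ i t := by
    rw [mul_sum, ← sum_add_distrib]
    refine sum_congr rfl fun t _ => ?_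
    rw [Nat.sub_add_cancel Nat.one_le_two_pow, pow_succ, mul_comm]
  simp only [sum_const, card_univ, Fintype.card_fin, smul_eq_mul, mul_one] at hsum
  show n = ∑ t, (2 ^ (i t + 1) - 1)
  omega

lemma isHomogeneous_prod_X (T : Finset (Fin k)) : (∏ j ∈ T, X j : P k).IsHomogeneous #T := by
  simpa using IsHomogeneous.prod T (fun j => (X j : P k)) (fun _ => 1)
    fun j _ => isHomogeneous_X (ZMod 2) j

lemma homogeneousComponent_prod_sum_X_pow_two_pow (N : ℕ) (S : Finset (Fin k)) {c : ℕ}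
    (hc : ∀ i : Fin #S → ℕ, c ≠ ∑ t, 2 ^ i t) :
    homogeneousComponent c (∏ j ∈ S, ∑ i ∈ range N, (X j : P k) ^ 2 ^ i) = 0 := by
  induction S using Finset.induction_on generalizing c with
  | empty =>
    have hc0 : ∀ i : Fin 0 → ℕ, c ≠ ∑ t, 2 ^ i t := hc
    rw [prod_empty, homogeneousComponent_of_mem (isHomogeneous_one (Fin k) (ZMod 2)),
      if_neg (by simpa using hc0 Fin.elim0)]
  | insert j S hj ih =>
    rw [prod_insert hj, sum_mul, map_sum]
    refine sum_eq_zero fun i _ => ?_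
    by_cases hi : 2 ^ i ≤ c
    · rw [homogeneousComponent_mul_of_le (isHomogeneous_X_pow j _) hi, ih, mul_zero]
      intro i' hi'
      rw [card_insert_of_notMem hj] at hc
      refine hc (Fin.cons i i') ?_
      simp only [Fin.sum_univ_succ, Fin.cons_zero, Fin.cons_succ]
      omega
    · exact homogeneousComponent_mul_of_lt (isHomogeneous_X_pow j _) (not_le.mp hi) _

lemma SqTotal_sum_X_pow_two_pow (j : Fin k) (N : ℕ) :
    SqTotal k (∑ i ∈ range N, X j ^ 2 ^ i) = X j + X j ^ 2 ^ N := by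
  have hstep : ∀ i, SqTotal k (X j ^ 2 ^ i) = X j ^ 2 ^ (i + 1) - X j ^ 2 ^ i := fun i => by
    rw [map_pow, SqTotal_X, add_pow_char_pow, CharTwo.sub_eq_add, add_comm, ← pow_mul,
      pow_succ' 2 i]
  rw [map_sum, sum_congr rfl fun i _ => hstep i, sum_range_sub (fun i => (X j : P k) ^ 2 ^ i),
    CharTwo.sub_eq_add, pow_zero, pow_one, add_comm]

lemma homogeneousComponent_eq_zero_of_mem_span_X_pow {D n : ℕ} (hn : n < D) {p : P k}
    (hp : p ∈ Ideal.span (Set.range fun j => X j ^ D)) : homogeneousComponent n p = 0 := by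
  obtain ⟨c, rfl⟩ := Ideal.mem_span_range_iff_exists_fun.mp hp
  simp_rw [map_sum, mul_comm (c _)]
  exact sum_eq_zero fun j _ => homogeneousComponent_mul_of_lt (isHomogeneous_X_pow j D) hn _

theorem monomial_mem_hitSubmodule_of_card_lt_mu (a : Fin k →₀ ℕ)
    (ha : #{j | Odd (a j)} < mu a.degree) : monomial a 1 ∈ hitSubmodule k a.degree := by
  set S : Finset (Fin k) := {j | Odd (a j)}
  set n := a.degree
  set m := (halve a).degree
  set z : P k := monomial (halve a) 1
  have hz : z.IsHomogeneous m := isHomogeneous_monomial _ rfl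
  have hn : n = #S + 2 * m := by
    refine (isHomogeneous_monomial (1 : ZMod 2) rfl).inj_right ?_
      (monomial_eq_zero.not.mpr one_ne_zero)
    rw [monomial_one_eq_prod_X_mul_sq, mul_comm 2]
    exact (isHomogeneous_prod_X S).mul (hz.pow 2)
  set V : P k := ∏ j ∈ S, ∑ i ∈ range (n + 1), X j ^ 2 ^ i
  have hV : homogeneousComponent (#S + m) V = 0 :=
    homogeneousComponent_prod_sum_X_pow_two_pow _ S fun i hi =>
      ha.not_ge (mu_le_of_add_eq i (by omega))
  have hSqV :
      SqTotal k V - ∏ j ∈ S, X j ∈ Ideal.span (Set.range fun j => X j ^ 2 ^ (n + 1)) := by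
    rw [← Ideal.Quotient.eq, map_prod, map_prod, map_prod]
    refine prod_congr rfl fun j _ => ?_
    rw [SqTotal_sum_X_pow_two_pow, map_add,
      Ideal.Quotient.eq_zero_iff_mem.mpr (Ideal.subset_span (Set.mem_range_self j)), add_zero]
  have hSq : homogeneousComponent n (SqTotal k (V * z)) = monomial a 1 := by
    rw [map_mul, ← sub_add_cancel (SqTotal k V) (∏ j ∈ S, X j), add_mul, map_add,
      homogeneousComponent_eq_zero_of_mem_span_X_pow (Nat.lt_two_pow_self.trans
        (Nat.pow_lt_pow_right one_lt_two n.lt_succ_self)) (Ideal.mul_mem_right _ _ hSqV),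
      zero_add, hn, homogeneousComponent_mul_of_le (isHomogeneous_prod_X S) le_self_add,
      Nat.add_sub_cancel_left, homogeneousComponent_two_mul_SqTotal_monomial,
      ← monomial_one_eq_prod_X_mul_sq]
  rw [← hSq]
  apply homogeneousComponent_SqTotal_mem_hitSubmodule
  rw [mul_comm, hn, homogeneousComponent_mul_of_le hz (by omega),
    show #S + 2 * m - m = #S + m by omega, hV, mul_zero]

end PetersonWood

section Bijectivity

variable {k d : ℕ}

open Finset

theorem mem_hitSubmodule_of_psi_eq_zero {n : ℕ} (hmu : k ≤ mu n) {p : P k}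
    (hp : p.IsHomogeneous n) (hψ : psi k p = 0) : p ∈ hitSubmodule k n := by
  rw [p.as_sum]
  refine Submodule.sum_mem _ fun a ha => ?_
  have hdeg : a.degree = n := (hp.degree_eq_sum_deg_support ha).symm
  obtain ⟨j, hj⟩ : ∃ j, ¬ Odd (a j) := by
    by_contra! hodd
    have := coeff_psi p (halve a)
    rw [hψ, coeff_zero, twiceAddOne_halve hodd] at this
    exact mem_support_iff.mp ha this.symm
  have hcard : #{j | Odd (a j)} < mu a.degree :=
    calc #{j | Odd (a j)} < #(univ : Finset (Fin k)) :=
          card_lt_card (filter_ssubset.mpr ⟨j, mem_univ j, hj⟩)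
      _ ≤ mu a.degree := by rw [card_univ, Fintype.card_fin, hdeg]; exact hmu
  rw [← mul_one (coeff a p), ← smul_eq_mul, ← smul_monomial, ← hdeg]
  exact Submodule.smul_mem _ _ (monomial_mem_hitSubmodule_of_card_lt_mu a hcard)

lemma psi_prod_X_mul_sq (w : P k) : psi k ((∏ j, X j) * w ^ 2) = w := by
  rw [psi_mul_sq, psi_prod_X, if_pos rfl, one_mul]

lemma isHomogeneous_psi {p : P k} (hp : p.IsHomogeneous (2 * d + k)) :
    (psi k p).IsHomogeneous d := by
  rw [← homogeneousComponent_eq_self hp, psi_homogeneousComponent]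
  exact homogeneousComponent_isHomogeneous d _

lemma isHomogeneous_prod_X_mul_sq {w : P k} (hw : w.IsHomogeneous d) :
    ((∏ j, X j) * w ^ 2).IsHomogeneous (2 * d + k) := by
  have := (isHomogeneous_prod_X (univ : Finset (Fin k))).mul (hw.pow 2)
  rwa [card_univ, Fintype.card_fin, mul_comm d, add_comm] at this

lemma add_prod_X_mul_psi_sq_mem_hitSubmodule (hmu : k ≤ mu (2 * d + k)) {p : P k}
    (hp : p.IsHomogeneous (2 * d + k)) :
    p + (∏ j, X j) * psi k p ^ 2 ∈ hitSubmodule k (2 * d + k) :=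
  mem_hitSubmodule_of_psi_eq_zero hmu
    (hp.add (isHomogeneous_prod_X_mul_sq (isHomogeneous_psi hp)))
    (by rw [map_add, psi_prod_X_mul_sq, CharTwo.add_self_eq_zero])

theorem prod_X_mul_sq_mem_hitSubmodule (hmu : k ≤ mu (2 * d + k)) {g : P k}
    (hg : g ∈ hitSubmodule k d) : (∏ j, X j) * g ^ 2 ∈ hitSubmodule k (2 * d + k) := by
  induction hg using Submodule.span_induction with
  | mem g hg =>
    obtain ⟨m, hm, h, hh, rfl⟩ := hg
    set u := homogeneousComponent (2 * d + k) (SqTotal k ((∏ j, X j) * h ^ 2))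
    have hu : u ∈ hitSubmodule k (2 * d + k) := by
      refine homogeneousComponent_SqTotal_mem_hitSubmodule ?_
      rw [homogeneousComponent_of_mem (isHomogeneous_prod_X_mul_sq hh), if_neg (by omega)]
    have hψu : psi k u = homogeneousComponent d (SqTotal k h) := by
      rw [psi_homogeneousComponent, psi_SqTotal, psi_prod_X_mul_sq]
    rw [← hψu, ← CharTwo.add_cancel_left u (_ * _)]
    exact add_mem hu
      (add_prod_X_mul_psi_sq_mem_hitSubmodule hmu (homogeneousComponent_isHomogeneous _ _))
  | zero => simp
  | add x y _ _ hx hy => rw [add_pow_char, mul_add]; exact add_mem hx hy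
  | smul r x _ hx => rw [smul_pow, ZMod.pow_card, mul_smul_comm]; exact Submodule.smul_mem _ r hx

theorem mem_hitSubmodule_of_psi_mem (hmu : k ≤ mu (2 * d + k)) {p : P k}
    (hp : p.IsHomogeneous (2 * d + k)) (hψ : psi k p ∈ hitSubmodule k d) :
    p ∈ hitSubmodule k (2 * d + k) := by
  rw [← CharTwo.add_cancel_right p ((∏ j, X j) * psi k p ^ 2)]
  exact add_mem (add_prod_X_mul_psi_sq_mem_hitSubmodule hmu hp)
    (prod_X_mul_sq_mem_hitSubmodule hmu hψ)

theorem kameko_injective (hmu : k ≤ mu (2 * d + k)) : Function.Injective (kameko k d) := by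
  refine (injective_iff_map_eq_zero _).mpr fun x hx => ?_
  obtain ⟨p, rfl⟩ := Submodule.mkQ_surjective _ x
  rw [kameko, Submodule.mkQ_apply, Submodule.mapQ_apply, Submodule.Quotient.mk_eq_zero,
    mem_hitTotal_iff, ← psi_homogeneousComponent] at hx
  rw [Submodule.mkQ_apply, Submodule.Quotient.mk_eq_zero, mem_hitTotal_iff]
  exact mem_hitSubmodule_of_psi_mem hmu (homogeneousComponent_isHomogeneous _ _) hx

theorem kameko_surjective : Function.Surjective (kameko k d) := by
  intro y
  obtain ⟨g, rfl⟩ := Submodule.mkQ_surjective _ y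
  refine ⟨(hitTotal k (2 * d + k)).mkQ ((∏ j, X j) * g ^ 2), ?_⟩
  rw [kameko, Submodule.mkQ_apply, Submodule.mapQ_apply, psi_prod_X_mul_sq]
  rfl

end Bijectivity

theorem statement1_general (k d : ℕ) :
    (∀ f ∈ hitSubmodule k (2 * d + k), psi k f ∈ hitSubmodule k d) ∧
    ∃ κ : QP k (2 * d + k) →ₗ[ZMod 2] QP k d,
      IsKameko k (2 * d + k) d κ ∧ (mu (2 * d + k) = k → Function.Bijective κ) :=
  ⟨fun _ hf => hitSubmodule_le_comap_psi d hf, kameko k d, fun _ _ => rfl,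
    fun hmu => ⟨kameko_injective hmu.ge, kameko_surjective⟩⟩

/-- Kameko's theorem. `ψ` sends hit homogeneous polynomials of degree
`2d + k` to hit homogeneous polynomials of degree `d`, hence induces an `𝔽₂`-linear map
`(QP_k)_{2d+k} → (QP_k)_d`; moreover, if `μ(2d+k) = k`, this induced map is an
isomorphism of `𝔽₂`-vector spaces. -/
theorem statement1 (k d : ℕ) (hk : 1 ≤ k) :
    (∀ f ∈ hitSubmodule k (2 * d + k), psi k f ∈ hitSubmodule k d) ∧
    ∃ κ : QP k (2 * d + k) →ₗ[ZMod 2] QP k d,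
      IsKameko k (2 * d + k) d κ ∧ (mu (2 * d + k) = k → Function.Bijective κ) :=
  statement1_general k d
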